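/- Fix an integer k ≥ 0 and let g_k : (0,∞) → (0,∞) be differentiable. Define h_k : (0,∞) → (0,∞) by the finite continued fraction h_k(x) = x + 1/(x + 2/(⋯ + k/g_k(x))); formally, b_k(x) = g_k(x), b_{j-1}(x) = x + j/b_j(x) for j = k, …, 1, and h_k(x) = b_0(x) (with h_0 = g_0). Let Δ_k(x) = φ(x)/h_k(x) − (1 − Φ(x)). Then for every x > 0, the sign of Δ_k'(x) equals (−1)^k times the sign of g_k(x)² − x·g_k(x) − k − g_k'(x). -/

import Mathlib

open MeasureTheory Real

/-!
Write `h = hcf k g`. Since `φ' = -x φ` and `Φ' = φ`, the derivative of `φ / h - (1 - Φ)` is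
`φ / h² · (h² - x h - h')`, so its sign is that of the Riccati defect `h² - x h - h'`.
Peeling off one level of the continued fraction, `g₁ = x + (k + 1) / g`, turns the defect
`g₁² - x g₁ - k - g₁'` into `-(k + 1) / g²` times `g² - x g - (k + 1) - g'`; each level thus
flips the sign, and induction on `k` gives the factor `(-1) ^ k`.
-/

/-- Standard Gaussian density. -/
noncomputable def gaussPdf (x : ℝ) : ℝ := Real.exp (-x ^ 2 / 2) / Real.sqrt (2 * Real.pi)

/-- Standard Gaussian distribution function. -/
noncomputable def gaussCdf (x : ℝ) : ℝ := ∫ t in Set.Iic x, gaussPdf t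

/-- Finite continued fraction `hcf k g x = x + 1/(x + 2/(⋯ + k/(g x)))`,
with `hcf 0 g = g`. -/
noncomputable def hcf : ℕ → (ℝ → ℝ) → ℝ → ℝ
  | 0, g => g
  | (k + 1), g => hcf k (fun x => x + ((k : ℝ) + 1) / g x)

lemma Real.sign_mul_of_pos {c : ℝ} (hc : 0 < c) (t : ℝ) : Real.sign (c * t) = Real.sign t := by
  rcases lt_trichotomy t 0 with ht | rfl | ht
  · rw [Real.sign_of_neg ht, Real.sign_of_neg (mul_neg_of_pos_of_neg hc ht)]
  · simp
  · rw [Real.sign_of_pos ht, Real.sign_of_pos (mul_pos hc ht)]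

lemma hasDerivAt_integral_Iic {f : ℝ → ℝ} (hint : Integrable f) (hcont : Continuous f) (x : ℝ) :
    HasDerivAt (fun y => ∫ t in Set.Iic y, f t) (f x) x := by
  have hsplit : (fun y => ∫ t in Set.Iic y, f t) =
      fun y => (∫ t in Set.Iic 0, f t) + ∫ t in (0 : ℝ)..y, f t := by
    funext y
    rw [← intervalIntegral.integral_Iic_sub_Iic hint.integrableOn hint.integrableOn]
    ring
  rw [hsplit]
  exact (intervalIntegral.integral_hasDerivAt_right hint.intervalIntegrable
    hcont.aestronglyMeasurable.stronglyMeasurableAtFilter hcont.continuousAt).const_add _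

lemma gaussPdf_eq_gaussianPDFReal : gaussPdf = ProbabilityTheory.gaussianPDFReal 0 1 := by
  funext x
  simp [gaussPdf, ProbabilityTheory.gaussianPDFReal, div_eq_inv_mul]

lemma integrable_gaussPdf : Integrable gaussPdf := by
  rw [gaussPdf_eq_gaussianPDFReal]
  exact ProbabilityTheory.integrable_gaussianPDFReal 0 1

lemma gaussPdf_pos (x : ℝ) : 0 < gaussPdf x := by
  unfold gaussPdf
  positivity

lemma continuous_gaussPdf : Continuous gaussPdf := by
  unfold gaussPdf
  fun_prop

lemma hasDerivAt_gaussPdf (x : ℝ) : HasDerivAt gaussPdf (-x * gaussPdf x) x := by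
  have hexponent : HasDerivAt (fun y : ℝ => -y ^ 2 / 2) (-x) x :=
    ((hasDerivAt_pow 2 x).fun_neg.div_const 2).congr_deriv (by ring)
  exact (hexponent.exp.div_const (√(2 * π))).congr_deriv (by unfold gaussPdf; ring)

lemma hasDerivAt_gaussCdf (x : ℝ) : HasDerivAt gaussCdf (gaussPdf x) x :=
  hasDerivAt_integral_Iic integrable_gaussPdf continuous_gaussPdf x

lemma hasDerivAt_gaussPdf_div_sub_one_sub_gaussCdf {h : ℝ → ℝ} {d x : ℝ} (hd : HasDerivAt h d x)
    (hx : h x ≠ 0) :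
    HasDerivAt (fun y => gaussPdf y / h y - (1 - gaussCdf y))
      (gaussPdf x / h x ^ 2 * (h x ^ 2 - x * h x - d)) x := by
  refine (((hasDerivAt_gaussPdf x).fun_div hd hx).fun_sub
    ((hasDerivAt_const x (1 : ℝ)).fun_sub (hasDerivAt_gaussCdf x))).congr_deriv ?_
  field_simp
  ring

lemma hcf_succ (k : ℕ) (g : ℝ → ℝ) :
    hcf (k + 1) g = hcf k (fun x => x + ((k : ℝ) + 1) / g x) := rfl

lemma hcf_pos (k : ℕ) {g : ℝ → ℝ} (hpos : ∀ x > (0 : ℝ), 0 < g x) {x : ℝ} (hx : 0 < x) :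
    0 < hcf k g x := by
  induction k generalizing g with
  | zero => exact hpos x hx
  | succ k ih => exact ih fun y hy => add_pos hy (div_pos (by positivity) (hpos y hy))

lemma riccati_defect_step {c G G' x : ℝ} (hG : G ≠ 0) :
    (x + c / G) ^ 2 - x * (x + c / G) - (c - 1) - (1 - c * G' / G ^ 2) =
      -(c / G ^ 2 * (G ^ 2 - x * G - c - G')) := by
  field_simp
  ring

lemma exists_hasDerivAt_hcf_sign (k : ℕ) {g g' : ℝ → ℝ} (hpos : ∀ x > (0 : ℝ), 0 < g x)
    (hderiv : ∀ x > (0 : ℝ), HasDerivAt g (g' x) x) {x : ℝ} (hx : 0 < x) :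
    ∃ d, HasDerivAt (hcf k g) d x ∧
      Real.sign (hcf k g x ^ 2 - x * hcf k g x - d) =
        (-1) ^ k * Real.sign (g x ^ 2 - x * g x - k - g' x) := by
  induction k generalizing g g' with
  | zero => exact ⟨g' x, hderiv x hx, by simp [hcf]⟩
  | succ k ih =>
    have hpos₁ : ∀ y > (0 : ℝ), 0 < y + ((k : ℝ) + 1) / g y :=
      fun y hy => add_pos hy (div_pos (by positivity) (hpos y hy))
    have hderiv₁ : ∀ y > (0 : ℝ), HasDerivAt (fun y => y + ((k : ℝ) + 1) / g y)
        (1 - ((k : ℝ) + 1) * g' y / g y ^ 2) y := fun y hy =>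
      ((hasDerivAt_id' y).add ((hasDerivAt_const y ((k : ℝ) + 1)).div (hderiv y hy)
        (hpos y hy).ne')).congr_deriv (by ring)
    obtain ⟨d, hd, hsign⟩ := ih hpos₁ hderiv₁
    refine ⟨d, hd, ?_⟩
    rw [hcf_succ, hsign]
    have hdefect := riccati_defect_step (c := (k : ℝ) + 1) (G' := g' x) (x := x) (hpos x hx).ne'
    rw [add_sub_cancel_right] at hdefect
    rw [hdefect, Real.sign_neg, Real.sign_mul_of_pos (by have := hpos x hx; positivity)]
    push_cast
    ring

/-- Lemma 1: the sign of the derivative of the approximation error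
Δ_k = φ/h_k - (1 - Φ) is (-1)^k times the sign of g_k² - x·g_k - k - g_k'. -/
theorem sign_deriv_approx_error (k : ℕ) (g g' : ℝ → ℝ)
    (hpos : ∀ x > (0 : ℝ), 0 < g x)
    (hderiv : ∀ x > (0 : ℝ), HasDerivAt g (g' x) x) :
    ∀ x > (0 : ℝ),
      Real.sign (deriv (fun y => gaussPdf y / hcf k g y - (1 - gaussCdf y)) x) =
        (-1) ^ k * Real.sign ((g x) ^ 2 - x * g x - (k : ℝ) - g' x) := by
  intro x hx
  have hh := hcf_pos k hpos hx
  obtain ⟨d, hd, hsign⟩ := exists_hasDerivAt_hcf_sign k hpos hderiv hx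
  rw [(hasDerivAt_gaussPdf_div_sub_one_sub_gaussCdf hd hh.ne').deriv,
    Real.sign_mul_of_pos (div_pos (gaussPdf_pos x) (pow_pos hh 2)), hsign]
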